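/- arXiv:2210.05987 — 4 statements merged into one kernel-verified Lean document; each statement's English description precedes it below -/
import Mathlib

section
/- If s minimizes the cubic model m(s) = f(x) + ∇f(x)ᵀs + ½ sᵀ∇²f(x)s + (σ/6)‖s‖³ with σ > 0, then f(x) − m(s) ≥ (σ/12)‖s‖³. -/
/-!
Restricting the cubic model to the ray `λ ↦ λ • s` gives a one-variable cubic
`f₀ + λ a + λ² b / 2 + λ³ c` with `a = ⟪g, s⟫`, `b = ⟪s, H s⟫`, `c = σ/6 ‖s‖³`, which is minimal
at `λ = 1`; hence `a + b + 3c = 0`. Comparing with `-s` gives `a ≤ 0`. Eliminating `b`,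
`f₀ - m(s) = (c - a) / 2 ≥ c / 2 = σ/12 ‖s‖³`.
-/

open scoped RealInnerProductSpace

theorem cubic_first_order_eq_zero_of_isLocalMin {a b c : ℝ}
    (h : IsLocalMin (fun t : ℝ => a * t + b * t ^ 2 + c * t ^ 3) 1) :
    a + 2 * b + 3 * c = 0 := by
  have hderiv : HasDerivAt (fun t : ℝ => a * t + b * t ^ 2 + c * t ^ 3) (a + 2 * b + 3 * c) 1 := by
    refine ((((hasDerivAt_id' (1 : ℝ)).const_mul a).fun_add
      ((hasDerivAt_pow 2 (1 : ℝ)).const_mul b)).fun_add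
      ((hasDerivAt_pow 3 (1 : ℝ)).const_mul c)).congr_deriv ?_
    norm_num; ring
  exact h.hasDerivAt_eq_zero hderiv

section CubicModel

variable {E : Type*} [NormedAddCommGroup E] [InnerProductSpace ℝ E]

noncomputable def cubicModel (f₀ : ℝ) (g : E) (H : E →L[ℝ] E) (σ : ℝ) (t : E) : ℝ :=
  f₀ + ⟪g, t⟫ + (1 / 2) * ⟪t, H t⟫ + σ / 6 * ‖t‖ ^ 3

variable (f₀ : ℝ) (g : E) (H : E →L[ℝ] E) (σ : ℝ) (s : E)

theorem cubicModel_smul {r : ℝ} (hr : 0 ≤ r) :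
    cubicModel f₀ g H σ (r • s) =
      f₀ + ⟪g, s⟫ * r + (1 / 2 * ⟪s, H s⟫) * r ^ 2 + (σ / 6 * ‖s‖ ^ 3) * r ^ 3 := by
  simp only [cubicModel, map_smul, real_inner_smul_left, real_inner_smul_right, norm_smul,
    Real.norm_of_nonneg hr]
  ring

theorem cubicModel_neg :
    cubicModel f₀ g H σ (-s) = cubicModel f₀ g H σ s - 2 * ⟪g, s⟫ := by
  simp only [cubicModel, map_neg, inner_neg_left, inner_neg_right, norm_neg]
  ring

variable {f₀ g H σ s}

theorem inner_nonpos_of_cubicModel_isMinOn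
    (hmin : IsMinOn (cubicModel f₀ g H σ) Set.univ s) : ⟪g, s⟫ ≤ 0 := by
  linarith [isMinOn_univ_iff.mp hmin (-s), cubicModel_neg f₀ g H σ s]

theorem cubicModel_first_order_of_isMinOn
    (hmin : IsMinOn (cubicModel f₀ g H σ) Set.univ s) :
    ⟪g, s⟫ + ⟪s, H s⟫ + σ / 2 * ‖s‖ ^ 3 = 0 := by
  have hray : IsLocalMin (fun r : ℝ => ⟪g, s⟫ * r + (1 / 2 * ⟪s, H s⟫) * r ^ 2
      + (σ / 6 * ‖s‖ ^ 3) * r ^ 3) 1 := by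
    filter_upwards [lt_mem_nhds one_pos] with r hr
    have h := isMinOn_univ_iff.mp hmin (r • s)
    rw [cubicModel_smul f₀ g H σ s hr.le, ← one_smul ℝ s, cubicModel_smul f₀ g H σ _ zero_le_one,
      one_smul] at h
    linarith
  linarith [cubic_first_order_eq_zero_of_isLocalMin hray]

theorem cubicModel_decrease_of_isMinOn
    (hmin : IsMinOn (cubicModel f₀ g H σ) Set.univ s) :
    σ / 12 * ‖s‖ ^ 3 ≤ f₀ - cubicModel f₀ g H σ s := by
  have hfirst := cubicModel_first_order_of_isMinOn hmin
  have hdescent := inner_nonpos_of_cubicModel_isMinOn hmin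
  unfold cubicModel
  linarith

end CubicModel

theorem stmt2_general {d : ℕ} (f : EuclideanSpace ℝ (Fin d) → ℝ)
    (x : EuclideanSpace ℝ (Fin d)) (σ : ℝ)
    (m : EuclideanSpace ℝ (Fin d) → ℝ)
    (hm : ∀ t, m t = f x + ⟪gradient f x, t⟫
        + (1 / 2) * ⟪t, fderiv ℝ (gradient f) x t⟫ + σ / 6 * ‖t‖ ^ 3)
    (s : EuclideanSpace ℝ (Fin d)) (hmin : ∀ t, m s ≤ m t) :
    f x - m s ≥ σ / 12 * ‖s‖ ^ 3 := by
  have hmodel : m = cubicModel (f x) (gradient f x) (fderiv ℝ (gradient f) x) σ := funext hm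
  subst hmodel
  exact cubicModel_decrease_of_isMinOn (isMinOn_univ_iff.mpr hmin)

/-- If s minimizes the cubic model m(s) = f(x) + ∇f(x)ᵀs + ½ sᵀ∇²f(x)s + (σ/6)‖s‖³
with σ > 0, then f(x) − m(s) ≥ (σ/12)‖s‖³. -/
theorem stmt2 {d : ℕ} (f : EuclideanSpace ℝ (Fin d) → ℝ) (hf : ContDiff ℝ 2 f)
    (x : EuclideanSpace ℝ (Fin d)) (σ : ℝ) (hσ : 0 < σ)
    (m : EuclideanSpace ℝ (Fin d) → ℝ)
    (hm : ∀ t, m t = f x + ⟪gradient f x, t⟫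
        + (1 / 2) * ⟪t, fderiv ℝ (gradient f) x t⟫ + σ / 6 * ‖t‖ ^ 3)
    (s : EuclideanSpace ℝ (Fin d)) (hmin : ∀ t, m s ≤ m t) :
    f x - m s ≥ σ / 12 * ‖s‖ ^ 3 :=
  stmt2_general f x σ m hm s hmin
end

section
/- Suppose s satisfies the cubic first-order condition ∇f(x) + ∇²f(x)s + (σ/2)‖s‖s = 0 and the Hessian of f is L_H-Lipschitz on the segment [x, x + s]. Then ‖∇f(x + s)‖ ≤ ½(σ + L_H)‖s‖². -/
open scoped RealInnerProductSpace
open Set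

/-!
Write `∇f(x + s) = [∇f(x + s) - ∇f(x) - ∇²f(x) s] + [∇f(x) + ∇²f(x) s]`. The first bracket is the
first-order Taylor remainder of `∇f`, at most `(L_H / 2)‖s‖²` because the Hessian is `L_H`-Lipschitz;
by the first-order condition the second bracket is `-(σ/2)‖s‖ s`, of norm `(σ / 2)‖s‖²`.
-/

theorem ContDiff.gradient {F : Type*} [NormedAddCommGroup F] [InnerProductSpace ℝ F]
    [CompleteSpace F] {f : F → ℝ} {n : WithTop ℕ∞} (hf : ContDiff ℝ (n + 1) f) :
    ContDiff ℝ n (gradient f) :=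
  (InnerProductSpace.toDual ℝ F).symm.contDiff.comp (hf.fderiv_right le_rfl)

section TaylorRemainder

variable {E F : Type*} [NormedAddCommGroup E] [NormedSpace ℝ E]
  [NormedAddCommGroup F] [NormedSpace ℝ F] {g : E → F} {x s : E}

theorem hasDerivAt_sub_sub_smul_fderiv {t : ℝ} (hg : DifferentiableAt ℝ g (x + t • s)) :
    HasDerivAt (fun t : ℝ => g (x + t • s) - g x - t • fderiv ℝ g x s)
      (fderiv ℝ g (x + t • s) s - fderiv ℝ g x s) t := by
  have hline : HasDerivAt (fun t : ℝ => x + t • s) s t := by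
    simpa using ((hasDerivAt_id t).smul_const s).const_add x
  convert ((hg.hasFDerivAt.comp_hasDerivAt t hline).sub_const (g x)).sub
    ((hasDerivAt_id t).smul_const (fderiv ℝ g x s)) using 1
  · rfl
  · rw [one_smul]

/-- Integrating `‖g' (x + t • s) - g' x‖ ≤ L t ‖s‖` over `t ∈ [0, 1]` gives the factor `1 / 2`. -/
theorem norm_sub_sub_fderiv_le_of_norm_fderiv_sub_le
    (hg : ∀ u ∈ segment ℝ x (x + s), DifferentiableAt ℝ g u) {L : ℝ}
    (hL : ∀ u ∈ segment ℝ x (x + s), ‖fderiv ℝ g u - fderiv ℝ g x‖ ≤ L * ‖u - x‖) :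
    ‖g (x + s) - g x - fderiv ℝ g x s‖ ≤ L / 2 * ‖s‖ ^ 2 := by
  have hmem : ∀ t ∈ Icc (0 : ℝ) 1, x + t • s ∈ segment ℝ x (x + s) := fun t ht => by
    rw [segment_eq_image']
    exact ⟨t, ht, by simp⟩
  have hderiv := fun t (ht : t ∈ Icc (0 : ℝ) 1) =>
    hasDerivAt_sub_sub_smul_fderiv (hg _ (hmem t ht))
  have hbound : ∀ t ∈ Ico (0 : ℝ) 1,
      ‖fderiv ℝ g (x + t • s) s - fderiv ℝ g x s‖ ≤ L * ‖s‖ ^ 2 * t := fun t ht => by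
    have ht' : t ∈ Icc (0 : ℝ) 1 := Ico_subset_Icc_self ht
    calc ‖fderiv ℝ g (x + t • s) s - fderiv ℝ g x s‖
        = ‖(fderiv ℝ g (x + t • s) - fderiv ℝ g x) s‖ := rfl
      _ ≤ ‖fderiv ℝ g (x + t • s) - fderiv ℝ g x‖ * ‖s‖ := ContinuousLinearMap.le_opNorm _ _
      _ ≤ L * ‖t • s‖ * ‖s‖ := by
          gcongr
          simpa using hL _ (hmem t ht')
      _ = L * ‖s‖ ^ 2 * t := by
          rw [norm_smul, Real.norm_of_nonneg ht.1]
          ring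
  have hB : ∀ t : ℝ, HasDerivAt (fun t => L * ‖s‖ ^ 2 / 2 * t ^ 2) (L * ‖s‖ ^ 2 * t) t := by
    intro t
    refine ((hasDerivAt_pow 2 t).const_mul (L * ‖s‖ ^ 2 / 2)).congr_deriv ?_
    ring
  have := image_norm_le_of_norm_deriv_right_le_deriv_boundary
    (fun t ht => (hderiv t ht).continuousAt.continuousWithinAt)
    (fun t ht => (hderiv t (Ico_subset_Icc_self ht)).hasDerivWithinAt)
    (by simp) hB hbound (right_mem_Icc.2 zero_le_one)
  simpa [div_mul_eq_mul_div] using this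

end TaylorRemainder

/-- If s satisfies the cubic first-order condition ∇f(x) + ∇²f(x)s + (σ/2)‖s‖s = 0
and the Hessian of f is L_H-Lipschitz on the segment [x, x + s], then
‖∇f(x + s)‖ ≤ ½(σ + L_H)‖s‖². -/
theorem stmt5 {d : ℕ} (f : EuclideanSpace ℝ (Fin d) → ℝ) (hf : ContDiff ℝ 2 f)
    (x s : EuclideanSpace ℝ (Fin d)) (σ LH : ℝ) (hσ : 0 < σ)
    (hLip : ∀ u ∈ segment ℝ x (x + s), ∀ v ∈ segment ℝ x (x + s),
      ‖fderiv ℝ (gradient f) u - fderiv ℝ (gradient f) v‖ ≤ LH * ‖u - v‖)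
    (hfoc : gradient f x + fderiv ℝ (gradient f) x s + (σ / 2 * ‖s‖) • s = 0) :
    ‖gradient f (x + s)‖ ≤ 1 / 2 * (σ + LH) * ‖s‖ ^ 2 := by
  have hg : Differentiable ℝ (gradient f) := (hf.gradient (n := 1)).differentiable one_ne_zero
  have hremainder := norm_sub_sub_fderiv_le_of_norm_fderiv_sub_le (fun u _ => hg u)
    (fun u hu => hLip u hu x (left_mem_segment ℝ x (x + s)))
  have hmodel_norm : ‖gradient f x + fderiv ℝ (gradient f) x s‖ = σ / 2 * ‖s‖ ^ 2 := by
    rw [eq_neg_of_add_eq_zero_left hfoc, norm_neg, norm_smul, Real.norm_of_nonneg (by positivity)]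
    ring
  calc ‖gradient f (x + s)‖
      = ‖(gradient f (x + s) - gradient f x - fderiv ℝ (gradient f) x s)
          + (gradient f x + fderiv ℝ (gradient f) x s)‖ := by abel_nf
    _ ≤ LH / 2 * ‖s‖ ^ 2 + σ / 2 * ‖s‖ ^ 2 :=
        (norm_add_le _ _).trans (add_le_add hremainder hmodel_norm.le)
    _ = 1 / 2 * (σ + LH) * ‖s‖ ^ 2 := by ring
end

section
/- Suppose s satisfies ∇f(x) + ∇²f(x)s + (σ/2)‖s‖s = 0 and the Hessian of f is L-Lipschitz on the segment [x, x+s]. Then for any vector v, ∇f(x+s)ᵀv ≤ −(σ/2)‖s‖(sᵀv) + (L/2)‖s‖²‖v‖. -/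
open scoped RealInnerProductSpace

/-- If s satisfies ∇f(x) + ∇²f(x)s + (σ/2)‖s‖s = 0 and the Hessian of f is L-Lipschitz
on the segment [x, x+s], then for any vector v the bound
∇f(x+s)ᵀv ≤ −(σ/2)‖s‖(sᵀv) + (L/2)‖s‖²‖v‖ always holds. -/
theorem stmt7 {d : ℕ} (f : EuclideanSpace ℝ (Fin d) → ℝ) (hf : ContDiff ℝ 2 f)
    (x s : EuclideanSpace ℝ (Fin d)) (σ L : ℝ) (hσ : 0 < σ)
    (hLip : ∀ u ∈ segment ℝ x (x + s), ∀ v ∈ segment ℝ x (x + s),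
      ‖fderiv ℝ (gradient f) u - fderiv ℝ (gradient f) v‖ ≤ L * ‖u - v‖)
    (hfoc : gradient f x + fderiv ℝ (gradient f) x s + (σ / 2 * ‖s‖) • s = 0)
    (v : EuclideanSpace ℝ (Fin d)) :
    ⟪gradient f (x + s), v⟫ ≤ -(σ / 2) * ‖s‖ * ⟪s, v⟫ + L / 2 * ‖s‖ ^ 2 * ‖v‖ := by
  have hG : ContDiff ℝ 1 (gradient f) := by
    have h1 : ContDiff ℝ 1 (fderiv ℝ f) := hf.fderiv_right (by norm_num)
    exact ((InnerProductSpace.toDual ℝ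
      (EuclideanSpace ℝ (Fin d))).symm.contDiff).comp h1
  set A := fderiv ℝ (gradient f) x with hA
  have key : ‖gradient f (x + s) - gradient f x - A s‖ ≤ L / 2 * ‖s‖ ^ 2 := by
    set g : ℝ → EuclideanSpace ℝ (Fin d) :=
      fun t => gradient f (x + t • s) - gradient f x - t • A s with hg
    have hderiv : ∀ t : ℝ,
        HasDerivAt g (fderiv ℝ (gradient f) (x + t • s) s - A s) t := by
      intro t
      have h1 : HasDerivAt (fun t : ℝ => x + t • s) s t := by
        simpa using ((hasDerivAt_id t).smul_const s).const_add x
      have h2 : HasFDerivAt (gradient f) (fderiv ℝ (gradient f) (x + t • s)) (x + t • s) :=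
        (hG.differentiable one_ne_zero (x + t • s)).hasFDerivAt
      have h3 : HasDerivAt (fun t : ℝ => gradient f (x + t • s))
          (fderiv ℝ (gradient f) (x + t • s) s) t := by
        exact h2.comp_hasDerivAt t h1
      have h4 : HasDerivAt (fun t : ℝ => t • A s) (A s) t := by
        simpa using (hasDerivAt_id t).smul_const (A s)
      exact (h3.sub_const (gradient f x)).sub h4
    have bound : ∀ t ∈ Set.Ico (0:ℝ) 1,
        ‖fderiv ℝ (gradient f) (x + t • s) s - A s‖ ≤ L * ‖s‖ ^ 2 * t := by
      intro t ht
      have hmem : x + t • s ∈ segment ℝ x (x + s) :=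
        ⟨1 - t, t, by linarith [ht.2], ht.1, by linarith, by module⟩
      have hx0 : x ∈ segment ℝ x (x + s) := left_mem_segment ℝ _ _
      have h := hLip _ hmem _ hx0
      calc ‖fderiv ℝ (gradient f) (x + t • s) s - A s‖
          = ‖(fderiv ℝ (gradient f) (x + t • s) - fderiv ℝ (gradient f) x) s‖ := by
            simp [hA]
        _ ≤ ‖fderiv ℝ (gradient f) (x + t • s) - fderiv ℝ (gradient f) x‖ * ‖s‖ :=
            ContinuousLinearMap.le_opNorm _ _
        _ ≤ (L * ‖x + t • s - x‖) * ‖s‖ :=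
            mul_le_mul_of_nonneg_right h (norm_nonneg s)
        _ = L * ‖s‖ ^ 2 * t := by
            have : x + t • s - x = t • s := by abel
            rw [this, norm_smul, Real.norm_eq_abs, abs_of_nonneg ht.1]; ring
    have hB : ∀ t : ℝ,
        HasDerivAt (fun t : ℝ => L / 2 * ‖s‖ ^ 2 * t ^ 2) (L * ‖s‖ ^ 2 * t) t := by
      intro t
      have := (hasDerivAt_pow 2 t).const_mul (L / 2 * ‖s‖ ^ 2)
      exact this.congr_deriv (by simp only [Nat.reduceSub, pow_one, Nat.cast_ofNat]; ring)
    have hmain := image_norm_le_of_norm_deriv_right_le_deriv_boundary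
      (f := g) (f' := fun t => fderiv ℝ (gradient f) (x + t • s) s - A s)
      (a := 0) (b := 1)
      (fun t _ => (hderiv t).continuousAt.continuousWithinAt)
      (fun t _ => (hderiv t).hasDerivWithinAt)
      (by simp [hg]) hB bound (Set.right_mem_Icc.mpr zero_le_one)
    simpa [hg] using hmain
  have hfoc' : gradient f x + A s = -((σ / 2 * ‖s‖) • s) := by
    have h := hfoc
    rw [add_assoc] at h
    linear_combination (norm := module) h
  have h1 : ⟪gradient f (x + s) - gradient f x - A s, v⟫ ≤ L / 2 * ‖s‖ ^ 2 * ‖v‖ :=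
    (real_inner_le_norm _ _).trans (mul_le_mul_of_nonneg_right key (norm_nonneg v))
  have h2 : ⟪gradient f x + A s, v⟫ = -(σ / 2) * ‖s‖ * ⟪s, v⟫ := by
    rw [hfoc', inner_neg_left, real_inner_smul_left]; ring
  have hsplit : ⟪gradient f (x + s), v⟫
      = ⟪gradient f (x + s) - gradient f x - A s, v⟫ + ⟪gradient f x + A s, v⟫ := by
    rw [← inner_add_left]
    congr 1
    abel
  rw [hsplit, ← h2] at *
  linarith
end

section
/- Let 0 < σ_min ≤ σ_0 and γ₁ > 1. Consider a sequence σ_{k+1} = γ₁σ_k on unsuccessful steps and σ_{k+1} ∈ [σ_min, σ_k] on successful steps, where a step is guaranteed successful whenever σ_k ≥ L_H. Then σ_k ≤ max{γ₁ L_H, σ_0, σ_min} for all k. -/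
/-- Let 0 < σ_min ≤ σ_0 and γ₁ > 1. If σ_{k+1} = γ₁σ_k on unsuccessful steps
(which can only occur when σ_k < L_H) and σ_{k+1} ∈ [σ_min, σ_k] on successful steps,
then σ_k ≤ max{γ₁ L_H, σ_0, σ_min} for all k. -/
theorem stmt9 (σ : ℕ → ℝ) (σmin LH γ₁ : ℝ)
    (hσmin : 0 < σmin) (hσ0 : σmin ≤ σ 0) (hγ₁ : 1 < γ₁) (hLH : 0 < LH)
    (hstep : ∀ k, (σ k < LH ∧ σ (k + 1) = γ₁ * σ k) ∨
      (σmin ≤ σ (k + 1) ∧ σ (k + 1) ≤ σ k)) :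
    ∀ k, σ k ≤ max (max (γ₁ * LH) (σ 0)) σmin := by
  intro k
  induction k with
  | zero => exact le_max_of_le_left (le_max_right _ _)
  | succ n ih =>
    rcases hstep n with ⟨h1, h2⟩ | ⟨_, h2⟩
    · calc σ (n + 1) = γ₁ * σ n := h2
        _ ≤ γ₁ * LH := by nlinarith
        _ ≤ _ := le_max_of_le_left (le_max_left _ _)
    · exact h2.trans ih
end
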